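/- arXiv:1601.03253 — 2 statements merged into one kernel-verified Lean document; each statement's English description precedes it below -/
import Mathlib

section
/- Let L, q, H > 0 and set y'(x) := (q/H)(L/2 − x) for x ∈ [0,L]. For all continuously differentiable functions u, v : [0,L] → ℝ, the squared cable-length increment satisfies |Γ(u)² − Γ(v)²| ≤ ( ∫₀^L |u'(x)| dx + ∫₀^L |v'(x)| dx )·∫₀^L |u'(x) − v'(x)| dx, where Γ(w) := ∫₀^L [√(1 + (w'(x) + y'(x))²) − √(1 + y'(x)²)] dx. -/
/-!
The map `t ↦ √(1 + t²)` is the norm of `1 + t i`, hence 1-Lipschitz. So the integrands of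
`Γ(u)`, `Γ(v)` and of `Γ(u) - Γ(v)` are bounded pointwise by `|u'|`, `|v'|` and `|u' - v'|`,
and `Γ(u)² - Γ(v)² = (Γ(u) + Γ(v)) (Γ(u) - Γ(v))`.
-/

open MeasureTheory
open scoped Interval

lemma lipschitzWith_sqrt_one_add_sq : LipschitzWith 1 fun t : ℝ => √(1 + t ^ 2) := by
  refine LipschitzWith.of_dist_le_mul fun a b => ?_
  have hnorm (t : ℝ) : √(1 + t ^ 2) = ‖(1 : ℂ) + t * Complex.I‖ := by
    rw [← Complex.ofReal_one, Complex.norm_add_mul_I, one_pow]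
  rw [hnorm, hnorm, Real.dist_eq, Real.dist_eq, NNReal.coe_one, one_mul]
  calc |‖(1 : ℂ) + a * Complex.I‖ - ‖(1 : ℂ) + b * Complex.I‖|
      ≤ ‖((1 : ℂ) + a * Complex.I) - (1 + b * Complex.I)‖ := abs_norm_sub_norm_le _ _
    _ = |a - b| := by
      rw [add_sub_add_left_eq_sub, ← sub_mul, Complex.norm_mul, Complex.norm_I, mul_one,
        ← Complex.ofReal_sub, Complex.norm_real, Real.norm_eq_abs]

lemma abs_sq_sub_sq_le_of_abs_le {A B a b c : ℝ} (hA : |A| ≤ a) (hB : |B| ≤ b)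
    (hAB : |A - B| ≤ c) : |A ^ 2 - B ^ 2| ≤ (a + b) * c := by
  calc |A ^ 2 - B ^ 2| = |A + B| * |A - B| := by rw [← abs_mul]; ring_nf
    _ ≤ (a + b) * c :=
      mul_le_mul ((abs_add_le A B).trans (add_le_add hA hB)) hAB (abs_nonneg _)
        (add_nonneg ((abs_nonneg A).trans hA) ((abs_nonneg B).trans hB))

lemma LipschitzWith.abs_sub_le_abs_sub {φ : ℝ → ℝ} (hφ : LipschitzWith 1 φ) (x y : ℝ) :
    |φ x - φ y| ≤ |x - y| := by
  simpa [Real.dist_eq] using hφ.dist_le_mul x y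

section LipschitzIncrement

variable {φ s u v : ℝ → ℝ} {a b : ℝ}

lemma LipschitzWith.intervalIntegrable_comp_add_sub (hφ : LipschitzWith 1 φ)
    (hs : AEStronglyMeasurable s (volume.restrict (Ι a b)))
    (hu : IntervalIntegrable u volume a b) :
    IntervalIntegrable (fun x => φ (u x + s x) - φ (s x)) volume a b := by
  refine hu.abs.mono_fun' ?_ (ae_of_all _ fun x => ?_)
  · exact (hφ.continuous.comp_aestronglyMeasurable (hu.def'.1.add hs)).sub
      (hφ.continuous.comp_aestronglyMeasurable hs)
  · simpa using hφ.abs_sub_le_abs_sub (u x + s x) (s x)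

lemma LipschitzWith.abs_integral_comp_add_sub_le (hφ : LipschitzWith 1 φ) (hab : a ≤ b)
    (hu : IntervalIntegrable u volume a b) :
    |∫ x in a..b, φ (u x + s x) - φ (s x)| ≤ ∫ x in a..b, |u x| := by
  rw [← Real.norm_eq_abs]
  refine intervalIntegral.norm_integral_le_of_norm_le hab (ae_of_all _ fun x _ => ?_) hu.abs
  simpa using hφ.abs_sub_le_abs_sub (u x + s x) (s x)

lemma LipschitzWith.abs_integral_comp_add_sub_sub_le (hφ : LipschitzWith 1 φ) (hab : a ≤ b)
    (hs : AEStronglyMeasurable s (volume.restrict (Ι a b)))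
    (hu : IntervalIntegrable u volume a b) (hv : IntervalIntegrable v volume a b) :
    |(∫ x in a..b, φ (u x + s x) - φ (s x)) - ∫ x in a..b, φ (v x + s x) - φ (s x)|
      ≤ ∫ x in a..b, |u x - v x| := by
  rw [← intervalIntegral.integral_sub (hφ.intervalIntegrable_comp_add_sub hs hu)
    (hφ.intervalIntegrable_comp_add_sub hs hv), ← Real.norm_eq_abs]
  refine intervalIntegral.norm_integral_le_of_norm_le hab (ae_of_all _ fun x _ => ?_)
    (hu.sub hv).abs
  simpa using hφ.abs_sub_le_abs_sub (u x + s x) (v x + s x)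

lemma LipschitzWith.abs_sq_integral_comp_add_sub_sub_sq_le (hφ : LipschitzWith 1 φ)
    (hab : a ≤ b) (hs : AEStronglyMeasurable s (volume.restrict (Ι a b)))
    (hu : IntervalIntegrable u volume a b) (hv : IntervalIntegrable v volume a b) :
    |(∫ x in a..b, φ (u x + s x) - φ (s x)) ^ 2 - (∫ x in a..b, φ (v x + s x) - φ (s x)) ^ 2|
      ≤ ((∫ x in a..b, |u x|) + ∫ x in a..b, |v x|) * ∫ x in a..b, |u x - v x| :=
  abs_sq_sub_sq_le_of_abs_le (hφ.abs_integral_comp_add_sub_le hab hu)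
    (hφ.abs_integral_comp_add_sub_le hab hv) (hφ.abs_integral_comp_add_sub_sub_le hab hs hu hv)

end LipschitzIncrement

theorem abs_sq_cable_increment_sub_le_general (L q H : ℝ) (hL : 0 < L)
    (u' v' : ℝ → ℝ)
    (hu' : ContinuousOn u' (Set.Icc (0:ℝ) L))
    (hv' : ContinuousOn v' (Set.Icc (0:ℝ) L)) :
    |(∫ x in (0:ℝ)..L,
        (Real.sqrt (1 + (u' x + q / H * (L / 2 - x)) ^ 2)
          - Real.sqrt (1 + (q / H * (L / 2 - x)) ^ 2))) ^ 2
      - (∫ x in (0:ℝ)..L,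
        (Real.sqrt (1 + (v' x + q / H * (L / 2 - x)) ^ 2)
          - Real.sqrt (1 + (q / H * (L / 2 - x)) ^ 2))) ^ 2|
      ≤ ((∫ x in (0:ℝ)..L, |u' x|) + ∫ x in (0:ℝ)..L, |v' x|)
          * ∫ x in (0:ℝ)..L, |u' x - v' x| := by
  have hs : Continuous fun x : ℝ => q / H * (L / 2 - x) := by fun_prop
  exact lipschitzWith_sqrt_one_add_sq.abs_sq_integral_comp_add_sub_sub_sq_le hL.le
    hs.aestronglyMeasurable (hu'.intervalIntegrable_of_Icc hL.le)
    (hv'.intervalIntegrable_of_Icc hL.le)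

/-- For C¹ functions `u, v` on `[0,L]`:
`|Γ(u)² − Γ(v)²| ≤ (‖u'‖₁ + ‖v'‖₁) ‖u' − v'‖₁`. -/
theorem abs_sq_cable_increment_sub_le (L q H : ℝ) (hL : 0 < L) (hq : 0 < q) (hH : 0 < H)
    (u u' v v' : ℝ → ℝ)
    (hu : ∀ x ∈ Set.Icc (0:ℝ) L, HasDerivAt u (u' x) x)
    (hu' : ContinuousOn u' (Set.Icc (0:ℝ) L))
    (hv : ∀ x ∈ Set.Icc (0:ℝ) L, HasDerivAt v (v' x) x)
    (hv' : ContinuousOn v' (Set.Icc (0:ℝ) L)) :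
    |(∫ x in (0:ℝ)..L,
        (Real.sqrt (1 + (u' x + q / H * (L / 2 - x)) ^ 2)
          - Real.sqrt (1 + (q / H * (L / 2 - x)) ^ 2))) ^ 2
      - (∫ x in (0:ℝ)..L,
        (Real.sqrt (1 + (v' x + q / H * (L / 2 - x)) ^ 2)
          - Real.sqrt (1 + (q / H * (L / 2 - x)) ^ 2))) ^ 2|
      ≤ ((∫ x in (0:ℝ)..L, |u' x|) + ∫ x in (0:ℝ)..L, |v' x|)
          * ∫ x in (0:ℝ)..L, |u' x - v' x| :=
  abs_sq_cable_increment_sub_le_general L q H hL u' v' hu' hv'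
end

section
/- Let L, q, H > 0 and set y'(x) := (q/H)(L/2 − x) for x ∈ [0,L]. Let w : [0,L] → ℝ be continuously differentiable with w' not identically zero, and define γ_w(t) := ∫₀^L [√(1 + t²·w'(x)²) − √(1 + y'(x)²)] dx for t ∈ ℝ. Then there exist real numbers T⁻ < 0 < T⁺ such that γ_w(T⁻) = γ_w(T⁺) = 0; consequently, for every such w the functions T^±·w − Y (with Y(x) := (q/(2H))x(L−x)) have zero cable-length increment, so the degenerate problem Γ(u)·(u''(x) − q/H)/(1 + (u'(x)+y'(x))²)^{3/2} = 0 on (0,L) with u(0) = u(L) = 0 admits infinitely many solutions. -/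
/-! The function `γ(t) = ∫₀^L √(1 + t² w'²) - ∫₀^L √(1 + y'²)` is continuous and even. It is
negative at `t = 0`, because the parabola at rest is strictly longer than its chord, and it grows at
least like `|t| ∫₀^L |w'|`, so the intermediate value theorem gives zeros `±T`. For `u = T w - Y`
one has `u' + y' = T w'`, hence `Γ(u) = γ(T) = 0` and the degenerate equation holds trivially.
The cubics `w(x) = x (L - x) (x - a)`, `a ∈ (0, L)`, produce pairwise distinct such solutions:
the one built from `a` is the only one taking the value `-Y(a)` at `a`. -/

open Set intervalIntegral MeasureTheory

section SqrtIntegral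

variable {a b : ℝ} {f : ℝ → ℝ}

theorem continuous_integral_sqrt_one_add_sq_mul (hf : Continuous f) :
    Continuous fun t => ∫ x in a..b, √(1 + t ^ 2 * f x ^ 2) :=
  continuous_parametric_intervalIntegral_of_continuous' (by fun_prop) a b

theorem mul_integral_abs_le_integral_sqrt_one_add_sq_mul (hab : a ≤ b) (hf : Continuous f)
    {t : ℝ} (ht : 0 ≤ t) : t * ∫ x in a..b, |f x| ≤ ∫ x in a..b, √(1 + t ^ 2 * f x ^ 2) := by
  rw [← intervalIntegral.integral_const_mul]
  refine integral_mono_on hab ((by fun_prop : Continuous fun x => t * |f x|).intervalIntegrable _ _)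
    ((by fun_prop : Continuous fun x => √(1 + t ^ 2 * f x ^ 2)).intervalIntegrable _ _)
    fun x _ => ?_
  calc t * |f x| = √((t * f x) ^ 2) := by rw [Real.sqrt_sq_eq_abs, abs_mul, abs_of_nonneg ht]
    _ ≤ √(1 + t ^ 2 * f x ^ 2) := Real.sqrt_le_sqrt (by nlinarith)

theorem Continuous.exists_pos_integral_sqrt_one_add_sq_mul_eq (hab : a < b) (hf : Continuous f)
    (hne : ∃ x ∈ Icc a b, f x ≠ 0) {c : ℝ} (hc : b - a < c) :
    ∃ T > 0, ∫ x in a..b, √(1 + T ^ 2 * f x ^ 2) = c := by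
  set φ := fun t => ∫ x in a..b, √(1 + t ^ 2 * f x ^ 2)
  have hφ0 : φ 0 = b - a := by simp [φ]
  obtain ⟨x₀, hx₀, hfx₀⟩ := hne
  have hI : 0 < ∫ x in a..b, |f x| :=
    integral_pos hab (by fun_prop) (fun x _ => abs_nonneg _) ⟨x₀, hx₀, abs_pos.2 hfx₀⟩
  have hT : 0 < c / ∫ x in a..b, |f x| := div_pos (by linarith) hI
  have hφT : c ≤ φ (c / ∫ x in a..b, |f x|) := by
    calc c = c / (∫ x in a..b, |f x|) * ∫ x in a..b, |f x| := (div_mul_cancel₀ _ hI.ne').symm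
      _ ≤ _ := mul_integral_abs_le_integral_sqrt_one_add_sq_mul hab.le hf hT.le
  obtain ⟨t, ht, hφt⟩ := intermediate_value_Icc hT.le
    (continuous_integral_sqrt_one_add_sq_mul hf).continuousOn ⟨hφ0.trans_le hc.le, hφT⟩
  refine ⟨t, ht.1.lt_of_ne ?_, hφt⟩
  rintro rfl
  exact hc.ne (hφ0 ▸ hφt)

theorem ContinuousOn.exists_pos_integral_sqrt_one_add_sq_mul_eq (hab : a < b)
    (hf : ContinuousOn f (Icc a b)) (hne : ∃ x ∈ Icc a b, f x ≠ 0) {c : ℝ} (hc : b - a < c) :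
    ∃ T > 0, ∫ x in a..b, √(1 + T ^ 2 * f x ^ 2) = c := by
  obtain ⟨g, hg, hgf⟩ : ∃ g, Continuous g ∧ EqOn g f (Icc a b) :=
    ⟨_, continuous_IccExtend_iff.2 hf.domRestrict, fun x hx => IccExtend_of_mem hab.le _ hx⟩
  obtain ⟨x₀, hx₀, hfx₀⟩ := hne
  obtain ⟨T, hT, hTc⟩ := hg.exists_pos_integral_sqrt_one_add_sq_mul_eq
    hab ⟨x₀, hx₀, hgf hx₀ ▸ hfx₀⟩ hc
  refine ⟨T, hT, (integral_congr fun x hx => ?_).trans hTc⟩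
  rw [hgf (uIcc_of_le hab.le ▸ hx)]

end SqrtIntegral

noncomputable section

variable {L q H : ℝ}

def restSlope (L q H x : ℝ) : ℝ := q / H * (L / 2 - x)

@[fun_prop]
theorem continuous_restSlope : Continuous (restSlope L q H) := by
  unfold restSlope; fun_prop

def restProfile (L q H x : ℝ) : ℝ := q / (2 * H) * (x * (L - x))

theorem hasDerivAt_restProfile (x : ℝ) :
    HasDerivAt (restProfile L q H) (restSlope L q H x) x := by
  have := ((hasDerivAt_id' x).fun_mul ((hasDerivAt_id' x).const_sub L)).const_mul (q / (2 * H))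
  exact this.congr_deriv (by unfold restSlope; ring)

def cableLengthIncrement (L q H : ℝ) (u' : ℝ → ℝ) : ℝ :=
  ∫ x in (0:ℝ)..L, (√(1 + (u' x + restSlope L q H x) ^ 2) - √(1 + restSlope L q H x ^ 2))

theorem cableLengthIncrement_mul_sub_restSlope (T : ℝ) (w' : ℝ → ℝ) :
    cableLengthIncrement L q H (fun x => T * w' x - restSlope L q H x) =
      ∫ x in (0:ℝ)..L, (√(1 + T ^ 2 * w' x ^ 2) - √(1 + restSlope L q H x ^ 2)) := by
  simp only [cableLengthIncrement, sub_add_cancel, mul_pow]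

theorem lt_integral_sqrt_one_add_restSlope_sq (hL : 0 < L) (hq : 0 < q) (hH : 0 < H) :
    L < ∫ x in (0:ℝ)..L, √(1 + restSlope L q H x ^ 2) := by
  have hy' : 0 < restSlope L q H 0 := by simp only [restSlope, sub_zero]; positivity
  have := integral_lt_integral_of_continuousOn_of_le_of_exists_lt (f := fun _ => 1)
    (g := fun x => √(1 + restSlope L q H x ^ 2)) hL continuousOn_const (by fun_prop)
    (fun x _ => Real.one_le_sqrt.2 (by nlinarith))
    ⟨0, left_mem_Icc.2 hL.le, Real.lt_sqrt (by norm_num) |>.2 (by nlinarith)⟩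
  simpa using this

theorem exists_pos_integral_sqrt_sub_sqrt_one_add_restSlope_sq_eq_zero
    (hL : 0 < L) (hq : 0 < q) (hH : 0 < H) {w' : ℝ → ℝ} (hw' : ContinuousOn w' (Icc 0 L))
    (hne : ∃ x ∈ Icc 0 L, w' x ≠ 0) :
    ∃ T > 0, ∫ x in (0:ℝ)..L, (√(1 + T ^ 2 * w' x ^ 2) - √(1 + restSlope L q H x ^ 2)) = 0 := by
  obtain ⟨T, hT, hTeq⟩ := hw'.exists_pos_integral_sqrt_one_add_sq_mul_eq hL hne
    (by simpa using lt_integral_sqrt_one_add_restSlope_sq hL hq hH)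
  have hint : ∀ g : ℝ → ℝ, ContinuousOn g (Icc 0 L) → IntervalIntegrable g volume 0 L :=
    fun g hg => hg.intervalIntegrable_of_Icc hL.le
  refine ⟨T, hT, ?_⟩
  rw [integral_sub (hint _ (by fun_prop)) (hint _ (by fun_prop)), hTeq, sub_self]

def inextensibleDeflections (L q H : ℝ) : Set (ℝ → ℝ) :=
  {u | u 0 = 0 ∧ u L = 0 ∧ ∃ u' : ℝ → ℝ, (∀ x ∈ Icc 0 L, HasDerivAt u (u' x) x) ∧
    ContinuousOn u' (Icc 0 L) ∧ cableLengthIncrement L q H u' = 0}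

theorem exists_pos_mul_sub_restProfile_mem_inextensibleDeflections
    (hL : 0 < L) (hq : 0 < q) (hH : 0 < H) {w w' : ℝ → ℝ} (hw0 : w 0 = 0) (hwL : w L = 0)
    (hw : ∀ x ∈ Icc 0 L, HasDerivAt w (w' x) x) (hw' : ContinuousOn w' (Icc 0 L))
    (hne : ∃ x ∈ Icc 0 L, w' x ≠ 0) :
    ∃ T > 0, (fun x => T * w x - restProfile L q H x) ∈ inextensibleDeflections L q H := by
  obtain ⟨T, hT, hγ⟩ :=
    exists_pos_integral_sqrt_sub_sqrt_one_add_restSlope_sq_eq_zero hL hq hH hw' hne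
  refine ⟨T, hT, by simp [hw0, restProfile], by simp [hwL, restProfile],
    fun x => T * w' x - restSlope L q H x, fun x hx => ((hw x hx).const_mul T).sub
    (hasDerivAt_restProfile x), by fun_prop, ?_⟩
  rw [cableLengthIncrement_mul_sub_restSlope, hγ]

theorem hasDerivAt_cubic (L a x : ℝ) :
    HasDerivAt (fun x => x * (L - x) * (x - a))
      ((L - x) * (x - a) - x * (x - a) + x * (L - x)) x := by
  have := ((hasDerivAt_id' x).fun_mul ((hasDerivAt_id' x).const_sub L)).fun_mul
    ((hasDerivAt_id' x).sub_const a)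
  exact this.congr_deriv (by ring)

theorem inextensibleDeflections_infinite (hL : 0 < L) (hq : 0 < q) (hH : 0 < H) :
    (inextensibleDeflections L q H).Infinite := by
  have hmem : ∀ a : ℝ, ∃ T > 0, (fun x => T * (x * (L - x) * (x - a)) - restProfile L q H x) ∈
      inextensibleDeflections L q H := by
    intro a
    refine exists_pos_mul_sub_restProfile_mem_inextensibleDeflections hL hq hH (by simp) (by simp)
      (fun x _ => hasDerivAt_cubic L a x) (by fun_prop) ?_
    by_cases ha : a = 0
    · exact ⟨L, right_mem_Icc.2 hL.le, by simp [ha, hL.ne']⟩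
    · exact ⟨0, left_mem_Icc.2 hL.le, by simp [ha, hL.ne']⟩
  choose T hT hTmem using hmem
  refine Set.infinite_of_injOn_mapsTo (s := Ioo 0 L) (fun a ha b _ hab => ?_)
    (fun a _ => hTmem a) (Ioo_infinite hL)
  have hba : T b * (a * (L - a) * (a - b)) = 0 := by
    have := congrFun hab a
    simp only [sub_self, mul_zero] at this
    linarith
  simpa [(hT b).ne', ha.1.ne', (sub_pos.2 ha.2).ne', sub_eq_zero] using hba

end

theorem degenerate_problem_infinitely_many_solutions_general
    (L q H : ℝ) (hL : 0 < L) (hq : 0 < q) (hH : 0 < H)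
    (w' : ℝ → ℝ)
    (hw' : ContinuousOn w' (Set.Icc (0:ℝ) L))
    (hne : ∃ x ∈ Set.Icc (0:ℝ) L, w' x ≠ 0) :
    (∃ Tm Tp : ℝ, Tm < 0 ∧ 0 < Tp ∧
      (∫ x in (0:ℝ)..L,
          (Real.sqrt (1 + Tm ^ 2 * w' x ^ 2)
            - Real.sqrt (1 + (q / H * (L / 2 - x)) ^ 2))) = 0 ∧
      (∫ x in (0:ℝ)..L,
          (Real.sqrt (1 + Tp ^ 2 * w' x ^ 2)
            - Real.sqrt (1 + (q / H * (L / 2 - x)) ^ 2))) = 0 ∧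
      -- the functions `T·w − Y` for `T ∈ {T⁻, T⁺}` have zero cable-length increment:
      -- their derivative is `u' = T·w' − y'`, so `u' + y' = T·w'` and `Γ(u) = 0`,
      -- whence they solve the degenerate equation pointwise
      ∀ T : ℝ, T = Tm ∨ T = Tp →
        (∫ x in (0:ℝ)..L,
            (Real.sqrt (1 + ((T * w' x - q / H * (L / 2 - x)) + q / H * (L / 2 - x)) ^ 2)
              - Real.sqrt (1 + (q / H * (L / 2 - x)) ^ 2))) = 0 ∧
        ∀ u'' : ℝ → ℝ, ∀ x ∈ Set.Ioo (0:ℝ) L,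
          (∫ s in (0:ℝ)..L,
              (Real.sqrt (1 + ((T * w' s - q / H * (L / 2 - s)) + q / H * (L / 2 - s)) ^ 2)
                - Real.sqrt (1 + (q / H * (L / 2 - s)) ^ 2)))
            * ((u'' x - q / H)
              / (1 + ((T * w' x - q / H * (L / 2 - x)) + q / H * (L / 2 - x)) ^ 2)
                  ^ ((3:ℝ)/2)) = 0)
    ∧ Set.Infinite {u : ℝ → ℝ |
        u 0 = 0 ∧ u L = 0 ∧
        ∃ u' : ℝ → ℝ, (∀ x ∈ Set.Icc (0:ℝ) L, HasDerivAt u (u' x) x) ∧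
          ContinuousOn u' (Set.Icc (0:ℝ) L) ∧
          (∫ x in (0:ℝ)..L,
              (Real.sqrt (1 + (u' x + q / H * (L / 2 - x)) ^ 2)
                - Real.sqrt (1 + (q / H * (L / 2 - x)) ^ 2))) = 0} := by
  obtain ⟨T, hT, hγ⟩ :=
    exists_pos_integral_sqrt_sub_sqrt_one_add_restSlope_sq_eq_zero hL hq hH hw' hne
  have hΓ : ∀ S, S = -T ∨ S = T →
      cableLengthIncrement L q H (fun x => S * w' x - restSlope L q H x) = 0 := by
    rintro S (rfl | rfl) <;> simpa only [cableLengthIncrement_mul_sub_restSlope, neg_sq] using hγ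
  refine ⟨⟨-T, T, neg_neg_of_pos hT, hT, by rw [neg_sq]; exact hγ, hγ,
    fun S hS => ⟨hΓ S hS, fun u'' x _ => mul_eq_zero_of_left (hΓ S hS) _⟩⟩,
    inextensibleDeflections_infinite hL hq hH⟩

/-- For a C¹ function `w` on `[0,L]` with `w'` not identically zero, there exist
`T⁻ < 0 < T⁺` with `γ_w(T⁻) = γ_w(T⁺) = 0`, where
`γ_w(t) = ∫₀^L [√(1 + t²w'(x)²) − √(1 + y'(x)²)] dx`; consequently the functions
`u = T^± w − Y` (with `Y(x) = (q/(2H))x(L−x)`, so `u' = T^± w' − y'`) have zero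
cable-length increment `Γ(u) = 0`, and hence solve the degenerate problem
`Γ(u)(u'' − q/H)/(1 + (u' + y')²)^{3/2} = 0` pointwise; moreover the set of C¹
functions vanishing at `0` and `L` with zero cable-length increment is infinite,
so the degenerate problem admits infinitely many solutions. -/
theorem degenerate_problem_infinitely_many_solutions
    (L q H : ℝ) (hL : 0 < L) (hq : 0 < q) (hH : 0 < H)
    (w w' : ℝ → ℝ)
    (hw : ∀ x ∈ Set.Icc (0:ℝ) L, HasDerivAt w (w' x) x)
    (hw' : ContinuousOn w' (Set.Icc (0:ℝ) L))
    (hne : ∃ x ∈ Set.Icc (0:ℝ) L, w' x ≠ 0) :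
    (∃ Tm Tp : ℝ, Tm < 0 ∧ 0 < Tp ∧
      (∫ x in (0:ℝ)..L,
          (Real.sqrt (1 + Tm ^ 2 * w' x ^ 2)
            - Real.sqrt (1 + (q / H * (L / 2 - x)) ^ 2))) = 0 ∧
      (∫ x in (0:ℝ)..L,
          (Real.sqrt (1 + Tp ^ 2 * w' x ^ 2)
            - Real.sqrt (1 + (q / H * (L / 2 - x)) ^ 2))) = 0 ∧
      -- the functions `T·w − Y` for `T ∈ {T⁻, T⁺}` have zero cable-length increment:
      -- their derivative is `u' = T·w' − y'`, so `u' + y' = T·w'` and `Γ(u) = 0`,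
      -- whence they solve the degenerate equation pointwise
      ∀ T : ℝ, T = Tm ∨ T = Tp →
        (∫ x in (0:ℝ)..L,
            (Real.sqrt (1 + ((T * w' x - q / H * (L / 2 - x)) + q / H * (L / 2 - x)) ^ 2)
              - Real.sqrt (1 + (q / H * (L / 2 - x)) ^ 2))) = 0 ∧
        ∀ u'' : ℝ → ℝ, ∀ x ∈ Set.Ioo (0:ℝ) L,
          (∫ s in (0:ℝ)..L,
              (Real.sqrt (1 + ((T * w' s - q / H * (L / 2 - s)) + q / H * (L / 2 - s)) ^ 2)
                - Real.sqrt (1 + (q / H * (L / 2 - s)) ^ 2)))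
            * ((u'' x - q / H)
              / (1 + ((T * w' x - q / H * (L / 2 - x)) + q / H * (L / 2 - x)) ^ 2)
                  ^ ((3:ℝ)/2)) = 0)
    ∧ Set.Infinite {u : ℝ → ℝ |
        u 0 = 0 ∧ u L = 0 ∧
        ∃ u' : ℝ → ℝ, (∀ x ∈ Set.Icc (0:ℝ) L, HasDerivAt u (u' x) x) ∧
          ContinuousOn u' (Set.Icc (0:ℝ) L) ∧
          (∫ x in (0:ℝ)..L,
              (Real.sqrt (1 + (u' x + q / H * (L / 2 - x)) ^ 2)
                - Real.sqrt (1 + (q / H * (L / 2 - x)) ^ 2))) = 0} :=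
  degenerate_problem_infinitely_many_solutions_general L q H hL hq hH w' hw' hne
end
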